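/- arXiv:1802.08509 — 5 statements merged into one kernel-verified Lean document; each statement's English description precedes it below -/
import Mathlib

section
/- Let Ω be a finite subset of ℝ^k × ℝ^ℓ, G : ℝ^k → ℝ any function, H : ℝ^ℓ → ℝ convex and differentiable, and F(X,Y) = G(X) + H(Y). If (X*,Y*) maximizes F over Ω, then with μ* = ∇H(Y*) and L(X,Y) = G(X) + ⟨μ*, Y⟩: (i) (X*,Y*) maximizes L over Ω, and (ii) every maximizer of L over Ω is also a maximizer of F over Ω. -/
open RealInnerProductSpace

lemma grad_ineq {n : ℕ} (H : EuclideanSpace ℝ (Fin n) → ℝ)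
    (hconv : ConvexOn ℝ Set.univ H) (hdiff : Differentiable ℝ H)
    (x y : EuclideanSpace ℝ (Fin n)) :
    H x + ⟪gradient H x, y - x⟫ ≤ H y := by
  set v := y - x with hv
  have hline : ∀ t : ℝ, HasDerivAt (fun t : ℝ => x + t • v) v t := by
    intro t
    simpa using ((hasDerivAt_id t).smul_const v).const_add x
  have hg : ∀ t : ℝ, HasDerivAt (fun t : ℝ => H (x + t • v))
      ((fderiv ℝ H (x + t • v)) v) t := fun t =>
    (hdiff (x + t • v)).hasFDerivAt.comp_hasDerivAt t (hline t)
  have hgrad : (fderiv ℝ H x) v = ⟪gradient H x, v⟫ := by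
    have := (hdiff x).hasGradientAt
    rw [hasGradientAt_iff_hasFDerivAt] at this
    rw [this.fderiv]
    simp [InnerProductSpace.toDual_apply_apply]
  have hgconv : ConvexOn ℝ Set.univ (fun t : ℝ => H (x + t • v)) := by
    have := hconv.comp_affineMap (AffineMap.lineMap x (x + v) : ℝ →ᵃ[ℝ] _)
    simp only [Function.comp_def, AffineMap.lineMap_apply_module, Set.preimage_univ] at this
    convert this using 2 with t
    case e'_12 =>
      congr 1
      module
    all_goals rfl
  have h01 : (0:ℝ) < 1 := one_pos
  have hs := hgconv.le_slope_of_hasDerivAt (Set.mem_univ (0:ℝ)) (Set.mem_univ 1) h01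
    (by simpa using hg 0)
  rw [slope_def_field] at hs
  simp only [zero_smul, add_zero, one_smul] at hs
  have : (fderiv ℝ H x) v ≤ H (x + v) - H x := by
    have := hs
    field_simp at this ⊢
    linarith [this]
  rw [hgrad] at this
  have hxy : x + v = y := by rw [hv]; abel
  rw [hxy] at this
  linarith

theorem stmt_3 (k l : ℕ)
    (Ω : Finset (EuclideanSpace ℝ (Fin k) × EuclideanSpace ℝ (Fin l)))
    (G : EuclideanSpace ℝ (Fin k) → ℝ) (H : EuclideanSpace ℝ (Fin l) → ℝ)
    (hconv : ConvexOn ℝ Set.univ H) (hdiff : Differentiable ℝ H)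
    (F : EuclideanSpace ℝ (Fin k) × EuclideanSpace ℝ (Fin l) → ℝ)
    (hF : ∀ p, F p = G p.1 + H p.2)
    (Xstar : EuclideanSpace ℝ (Fin k)) (Ystar : EuclideanSpace ℝ (Fin l))
    (hmem : (Xstar, Ystar) ∈ Ω)
    (hmax : ∀ p ∈ Ω, F p ≤ F (Xstar, Ystar))
    (L : EuclideanSpace ℝ (Fin k) × EuclideanSpace ℝ (Fin l) → ℝ)
    (hL : ∀ p, L p = G p.1 + ⟪gradient H Ystar, p.2⟫) :
    (∀ p ∈ Ω, L p ≤ L (Xstar, Ystar)) ∧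
    (∀ p ∈ Ω, (∀ q ∈ Ω, L q ≤ L p) → ∀ q ∈ Ω, F q ≤ F p) := by
  have key : ∀ Y : EuclideanSpace ℝ (Fin l),
      H Ystar + (⟪gradient H Ystar, Y⟫ - ⟪gradient H Ystar, Ystar⟫) ≤ H Y := by
    intro Y
    have := grad_ineq H hconv hdiff Ystar Y
    rwa [inner_sub_right] at this
  have part1 : ∀ p ∈ Ω, L p ≤ L (Xstar, Ystar) := by
    intro p hp
    have h1 := hmax p hp
    rw [hF, hF] at h1
    rw [hL, hL]
    have h2 := key p.2
    simp only at h1 ⊢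
    linarith
  refine ⟨part1, ?_⟩
  intro p hp hpmax q hq
  have h1 := hpmax (Xstar, Ystar) hmem
  have h2 := key p.2
  have h3 := hmax q hq
  rw [hL, hL] at h1
  rw [hF, hF] at h3
  rw [hF, hF]
  simp only at h1 h3 ⊢
  linarith
end

section
/- Let Ω be a finite subset of (ℝ^p)^k, let G₁,…,G_k : ℝ^p → ℝ be convex differentiable functions, and let F(X₁,…,X_k) = Σᵢ Gᵢ(Xᵢ). If X* = (X₁*,…,X_k*) maximizes F over Ω, then there exist vectors μ₁*,…,μ_k* ∈ ℝ^p such that X* maximizes the linear function L(X₁,…,X_k) = Σᵢ ⟨μᵢ*, Xᵢ⟩ over Ω, and moreover every maximizer of L over Ω is a maximizer of F over Ω. -/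
open RealInnerProductSpace

/-- Gradient inequality for a convex differentiable function. -/
lemma grad_ineq_s4 {E : Type*} [NormedAddCommGroup E] [InnerProductSpace ℝ E]
    {f : E → ℝ} (hc : ConvexOn ℝ Set.univ f) (hd : Differentiable ℝ f)
    (x y : E) : fderiv ℝ f x (y - x) ≤ f y - f x := by
  set g : ℝ → ℝ := fun t => f (x + t • (y - x)) with hg
  have hgc : ConvexOn ℝ Set.univ g := by
    have h := hc.comp_affineMap (AffineMap.lineMap x y : ℝ →ᵃ[ℝ] E)
    have he : g = f ∘ (AffineMap.lineMap x y : ℝ →ᵃ[ℝ] E) := by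
      funext t
      simp [g, AffineMap.lineMap_apply, add_comm, Function.comp]
    rw [he]
    simpa using h
  have hinner : HasDerivAt (fun t : ℝ => x + t • (y - x)) (y - x) 0 := by
    simpa using ((hasDerivAt_id (0:ℝ)).smul_const (y - x)).const_add x
  have hderiv : HasDerivAt g (fderiv ℝ f x (y - x)) 0 := by
    have hfd : HasFDerivAt f (fderiv ℝ f x) (x + (0:ℝ) • (y - x)) := by
      simpa using (hd x).hasFDerivAt
    have := hfd.comp_hasDerivAt 0 hinner
    exact this
  have h01 : (0:ℝ) < 1 := one_pos
  have := hgc.le_slope_of_hasDerivAt (Set.mem_univ 0) (Set.mem_univ 1) h01 hderiv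
  have hslope : slope g 0 1 = f y - f x := by
    simp [slope_def_field, g]
  rw [hslope] at this
  exact this

theorem stmt_4 (k p : ℕ)
    (Ω : Finset (Fin k → EuclideanSpace ℝ (Fin p)))
    (G : Fin k → EuclideanSpace ℝ (Fin p) → ℝ)
    (hconv : ∀ i, ConvexOn ℝ Set.univ (G i))
    (hdiff : ∀ i, Differentiable ℝ (G i))
    (F : (Fin k → EuclideanSpace ℝ (Fin p)) → ℝ)
    (hF : ∀ X, F X = ∑ i, G i (X i))
    (Xstar : Fin k → EuclideanSpace ℝ (Fin p))
    (hmem : Xstar ∈ Ω) (hmax : ∀ X ∈ Ω, F X ≤ F Xstar) :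
    ∃ μ : Fin k → EuclideanSpace ℝ (Fin p),
      (∀ X ∈ Ω, ∑ i, ⟪μ i, X i⟫ ≤ ∑ i, ⟪μ i, Xstar i⟫) ∧
      (∀ X ∈ Ω, (∀ Y ∈ Ω, ∑ i, ⟪μ i, Y i⟫ ≤ ∑ i, ⟪μ i, X i⟫) →
        ∀ Y ∈ Ω, F Y ≤ F X) := by
  set μ : Fin k → EuclideanSpace ℝ (Fin p) := fun i =>
    (InnerProductSpace.toDual ℝ _).symm (fderiv ℝ (G i) (Xstar i)) with hμ
  have hμapp : ∀ i z, ⟪μ i, z⟫ = fderiv ℝ (G i) (Xstar i) z := fun i z => by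
    simp [hμ, InnerProductSpace.toDual_symm_apply]
  -- key inequality: L X - L Xstar ≤ F X - F Xstar
  have key : ∀ X : Fin k → EuclideanSpace ℝ (Fin p),
      (∑ i, ⟪μ i, X i⟫) - (∑ i, ⟪μ i, Xstar i⟫) ≤ F X - F Xstar := by
    intro X
    rw [hF X, hF Xstar, ← Finset.sum_sub_distrib, ← Finset.sum_sub_distrib]
    apply Finset.sum_le_sum
    intro i _
    have := grad_ineq_s4 (hconv i) (hdiff i) (Xstar i) (X i)
    rw [hμapp, hμapp, ← map_sub]
    exact this
  refine ⟨μ, ?_, ?_⟩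
  · intro X hX
    have := key X
    have h2 := hmax X hX
    linarith
  · intro X hX hLmax Y hY
    have h1 := key X
    have h2 := hLmax Xstar hmem
    have h3 := hmax X hX
    have h4 := hmax Y hY
    linarith
end

section
/- Let W = {w₁,…,w_n} be a set of n > k points in ℝ^k in general position (no k+1 of them lie on a common hyperplane). If (W₁, W₂) is a partition of W that is weakly linearly separated by some hyperplane H, then there exists a hyperplane H̃ passing through exactly k points of W that also weakly linearly separates W₁ and W₂. -/
open Finset Matrix

section Aux
open Submodule Module


lemma exists_perp (k : ℕ) (S : Finset (Fin k → ℝ)) (hS : S.card < k)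
    (c : Fin k → ℝ) (α : ℝ) (hc : c ≠ 0) :
    ∃ d : Fin k → ℝ, ∃ β : ℝ, (∀ w ∈ S, d ⬝ᵥ w = β) ∧ ¬(d = 0 ∧ β = 0) ∧
      ∀ t : ℝ, ¬(c + t • d = 0 ∧ α + t * β = 0) := by
  set Φ : ((Fin k → ℝ) × ℝ) →ₗ[ℝ] (↥S → ℝ) :=
    { toFun := fun p => fun w => p.1 ⬝ᵥ (w : Fin k → ℝ) - p.2
      map_add' := by intro p q; funext w; simp [add_dotProduct]; ring
      map_smul' := by intro a p; funext w; simp [smul_dotProduct, smul_eq_mul]; ring } with hΦ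
  have hdom : finrank ℝ ((Fin k → ℝ) × ℝ) = k + 1 := by
    simp [Module.finrank_prod]
  have hrank := LinearMap.finrank_range_add_finrank_ker Φ
  have hle : finrank ℝ (LinearMap.range Φ) ≤ S.card := by
    have := Submodule.finrank_le (LinearMap.range Φ)
    simpa using this
  have hker : 2 ≤ finrank ℝ (LinearMap.ker Φ) := by omega
  have hca : ((c, α) : (Fin k → ℝ) × ℝ) ≠ 0 := by
    simp [Prod.ext_iff]; intro h; exact absurd h hc
  have hspan : finrank ℝ (span ℝ {((c, α) : (Fin k → ℝ) × ℝ)}) = 1 :=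
    finrank_span_singleton hca
  have hnle : ¬ (LinearMap.ker Φ ≤ span ℝ {((c, α) : (Fin k → ℝ) × ℝ)}) := by
    intro h
    have h2 := Submodule.finrank_mono h
    rw [hspan] at h2
    exact absurd (le_trans hker h2) (by norm_num)
  obtain ⟨v, hvker, hvspan⟩ := SetLike.not_le_iff_exists.mp hnle
  refine ⟨v.1, v.2, ?_, ?_, ?_⟩
  · intro w hw
    have : Φ v = 0 := hvker
    have := congrFun this ⟨w, hw⟩
    simp [hΦ] at this
    linear_combination this
  · rintro ⟨h1, h2⟩
    apply hvspan
    have : v = 0 := Prod.ext h1 h2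
    simp [this]
  · rintro t ⟨h1, h2⟩
    have ht : t ≠ 0 := by rintro rfl; simp at h1; exact hc h1
    apply hvspan
    rw [Submodule.mem_span_singleton]
    refine ⟨(-t)⁻¹, ?_⟩
    have hv : (c, α) = (-t) • v := by
      apply Prod.ext
      · simp; linear_combination h1
      · simp; linear_combination h2
    rw [hv, smul_smul, inv_mul_cancel₀ (by simpa using ht), one_smul]
end Aux


lemma step_key (k : ℕ) (W W₁ W₂ : Finset (Fin k → ℝ)) (hunion : W₁ ∪ W₂ = W)
    (c : Fin k → ℝ) (α : ℝ)
    (h1 : ∀ w ∈ W₁, α ≤ c ⬝ᵥ w) (h2 : ∀ w ∈ W₂, c ⬝ᵥ w ≤ α)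
    (d : Fin k → ℝ) (β : ℝ)
    (hdS : ∀ w ∈ W, c ⬝ᵥ w = α → d ⬝ᵥ w = β)
    (hline : ∀ t : ℝ, ¬(c + t • d = 0 ∧ α + t * β = 0))
    (hwit : ∃ w ∈ W, d ⬝ᵥ w - β ≠ 0 ∧ 0 < (α - c ⬝ᵥ w) / (d ⬝ᵥ w - β)) :
    ∃ c' : Fin k → ℝ, c' ≠ 0 ∧ ∃ α' : ℝ,
      (∀ w ∈ W₁, α' ≤ c' ⬝ᵥ w) ∧ (∀ w ∈ W₂, c' ⬝ᵥ w ≤ α') ∧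
      (W.filter (fun w => c ⬝ᵥ w = α)).card < (W.filter (fun w => c' ⬝ᵥ w = α')).card := by
  classical
  set tv : (Fin k → ℝ) → ℝ := fun w => (α - c ⬝ᵥ w) / (d ⬝ᵥ w - β) with htv
  set F : Finset (Fin k → ℝ) := W.filter (fun w => d ⬝ᵥ w - β ≠ 0 ∧ 0 < tv w) with hF
  obtain ⟨wit, hwitW, hwit1, hwit2⟩ := hwit
  have hFne : F.Nonempty := ⟨wit, Finset.mem_filter.mpr ⟨hwitW, hwit1, hwit2⟩⟩
  set T : Finset ℝ := F.image tv with hT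
  have hTne : T.Nonempty := hFne.image tv
  set t : ℝ := T.min' hTne with htdef
  obtain ⟨w₀, hw₀F, hw₀t⟩ := Finset.mem_image.mp (T.min'_mem hTne)
  have hw₀W : w₀ ∈ W := (Finset.mem_filter.mp hw₀F).1
  have hw₀g : d ⬝ᵥ w₀ - β ≠ 0 := (Finset.mem_filter.mp hw₀F).2.1
  have ht_pos : 0 < t := by rw [htdef, ← hw₀t]; exact (Finset.mem_filter.mp hw₀F).2.2
  have ht_le : ∀ w ∈ F, t ≤ tv w := fun w hw => T.min'_le _ (Finset.mem_image_of_mem tv hw)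
  set c' : Fin k → ℝ := c + t • d with hc'
  set α' : ℝ := α + t * β with hα'
  have hdot : ∀ w, c' ⬝ᵥ w = c ⬝ᵥ w + t * (d ⬝ᵥ w) := by
    intro w; simp [hc', add_dotProduct, smul_dotProduct, smul_eq_mul]
  -- w₀ lies on the new hyperplane
  have hw₀on : c' ⬝ᵥ w₀ = α' := by
    rw [hdot]
    have : t = (α - c ⬝ᵥ w₀) / (d ⬝ᵥ w₀ - β) := hw₀t.symm
    rw [hα', this]
    field_simp
    ring
  -- points of S stay on the new hyperplane
  have hSon : ∀ w ∈ W, c ⬝ᵥ w = α → c' ⬝ᵥ w = α' := by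
    intro w hw hwα
    rw [hdot, hwα, hdS w hw hwα, hα']
  have hc'0 : c' ≠ 0 := by
    intro h0
    have hα'0 : α' ≠ 0 := by
      intro h; exact hline t ⟨by rw [← hc']; exact h0, by rw [← hα']; exact h⟩
    apply hα'0
    rw [← hw₀on, h0, zero_dotProduct]
  refine ⟨c', hc'0, α', ?_, ?_, ?_⟩
  · -- W₁ side
    intro w hw
    have hwW : w ∈ W := hunion ▸ Finset.mem_union_left _ hw
    by_cases hwS : c ⬝ᵥ w = α
    · rw [hSon w hwW hwS]
    · have hf : 0 < c ⬝ᵥ w - α := by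
        have := h1 w hw; rcases lt_or_eq_of_le this with h | h
        · linarith
        · exact absurd h.symm hwS
      rw [hdot]
      rcases le_or_gt 0 (d ⬝ᵥ w - β) with hg | hg
      · nlinarith
      · have hwF : w ∈ F := by
          refine Finset.mem_filter.mpr ⟨hwW, by linarith, ?_⟩
          rw [htv]
          apply div_pos_of_neg_of_neg <;> linarith
        have h3 : t ≤ (α - c ⬝ᵥ w) / (d ⬝ᵥ w - β) := ht_le w hwF
        have h4 : α - c ⬝ᵥ w ≤ t * (d ⬝ᵥ w - β) := (le_div_iff_of_neg hg).mp h3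
        have h5 : t * (d ⬝ᵥ w - β) = t * (d ⬝ᵥ w) - t * β := by ring
        linarith
  · -- W₂ side
    intro w hw
    have hwW : w ∈ W := hunion ▸ Finset.mem_union_right _ hw
    by_cases hwS : c ⬝ᵥ w = α
    · rw [hSon w hwW hwS]
    · have hf : c ⬝ᵥ w - α < 0 := by
        have := h2 w hw; rcases lt_or_eq_of_le this with h | h
        · linarith
        · exact absurd h hwS
      rw [hdot]
      rcases le_or_gt (d ⬝ᵥ w - β) 0 with hg | hg
      · nlinarith
      · have hwF : w ∈ F := by
          refine Finset.mem_filter.mpr ⟨hwW, by linarith, ?_⟩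
          rw [htv]
          apply div_pos <;> linarith
        have h3 : t ≤ (α - c ⬝ᵥ w) / (d ⬝ᵥ w - β) := ht_le w hwF
        have h4 : t * (d ⬝ᵥ w - β) ≤ α - c ⬝ᵥ w := (le_div_iff₀ hg).mp h3
        have h5 : t * (d ⬝ᵥ w - β) = t * (d ⬝ᵥ w) - t * β := by ring
        linarith
  · -- cardinality increases
    apply Finset.card_lt_card
    rw [Finset.ssubset_iff_of_subset]
    · refine ⟨w₀, ?_, ?_⟩
      · exact Finset.mem_filter.mpr ⟨hw₀W, hw₀on⟩
      · intro hmem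
        have := (Finset.mem_filter.mp hmem).2
        exact hw₀g (by rw [hdS w₀ hw₀W this]; ring)
    · intro w hw
      obtain ⟨hwW, hwα⟩ := Finset.mem_filter.mp hw
      exact Finset.mem_filter.mpr ⟨hwW, hSon w hwW hwα⟩

lemma aux_ind (k : ℕ) (W W₁ W₂ : Finset (Fin k → ℝ)) (hW : k < W.card)
    (hgen : ∀ c : Fin k → ℝ, c ≠ 0 → ∀ α : ℝ,
      (W.filter (fun w => c ⬝ᵥ w = α)).card ≤ k)
    (hunion : W₁ ∪ W₂ = W) :
    ∀ j : ℕ, ∀ c : Fin k → ℝ, c ≠ 0 → ∀ α : ℝ,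
      (∀ w ∈ W₁, α ≤ c ⬝ᵥ w) → (∀ w ∈ W₂, c ⬝ᵥ w ≤ α) →
      k - (W.filter (fun w => c ⬝ᵥ w = α)).card ≤ j →
      ∃ c' : Fin k → ℝ, c' ≠ 0 ∧ ∃ α' : ℝ,
        (W.filter (fun w => c' ⬝ᵥ w = α')).card = k ∧
        (∀ w ∈ W₁, α' ≤ c' ⬝ᵥ w) ∧ (∀ w ∈ W₂, c' ⬝ᵥ w ≤ α') := by
  intro j
  induction j with
  | zero =>
    intro c hc α hs1 hs2 hj
    exact ⟨c, hc, α, le_antisymm (hgen c hc α) (by omega), hs1, hs2⟩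
  | succ j ih =>
    intro c hc α hs1 hs2 hj
    by_cases hcard : k ≤ (W.filter (fun w => c ⬝ᵥ w = α)).card
    · exact ⟨c, hc, α, le_antisymm (hgen c hc α) hcard, hs1, hs2⟩
    · push_neg at hcard
      obtain ⟨d, β, hdS, hdβ0, hline⟩ :=
        exists_perp k (W.filter (fun w => c ⬝ᵥ w = α)) hcard c α hc
      have hdS' : ∀ w ∈ W, c ⬝ᵥ w = α → d ⬝ᵥ w = β := fun w hw hα =>
        hdS w (Finset.mem_filter.mpr ⟨hw, hα⟩)
      -- find a point not on the moving hyperplane direction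
      have hws : ∃ w ∈ W, d ⬝ᵥ w ≠ β := by
        by_contra h
        push_neg at h
        rcases eq_or_ne d 0 with hd0 | hd0
        · obtain ⟨w, hw⟩ := Finset.card_pos.mp (by omega : 0 < W.card)
          have hβ : β = 0 := by rw [← h w hw, hd0, zero_dotProduct]
          exact hdβ0 ⟨hd0, hβ⟩
        · have := hgen d hd0 β
          rw [Finset.filter_true_of_mem h] at this
          omega
      obtain ⟨ws, hwsW, hwsg⟩ := hws
      have hwsg' : d ⬝ᵥ ws - β ≠ 0 := sub_ne_zero.mpr hwsg
      have hwsf : α - c ⬝ᵥ ws ≠ 0 := by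
        intro h
        exact hwsg (hdS' ws hwsW (by linarith [sub_eq_zero.mp h]))
      have htv0 : (α - c ⬝ᵥ ws) / (d ⬝ᵥ ws - β) ≠ 0 := div_ne_zero hwsf hwsg'
      have hstep : ∃ c'' : Fin k → ℝ, c'' ≠ 0 ∧ ∃ α'' : ℝ,
          (∀ w ∈ W₁, α'' ≤ c'' ⬝ᵥ w) ∧ (∀ w ∈ W₂, c'' ⬝ᵥ w ≤ α'') ∧
          (W.filter (fun w => c ⬝ᵥ w = α)).card <
            (W.filter (fun w => c'' ⬝ᵥ w = α'')).card := by
        rcases lt_or_gt_of_ne htv0 with hneg | hpos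
        · -- use (-d, -β)
          apply step_key k W W₁ W₂ hunion c α hs1 hs2 (-d) (-β)
          · intro w hw hα; rw [neg_dotProduct, hdS' w hw hα]
          · rintro t ⟨ha, hb⟩
            refine hline (-t) ⟨?_, ?_⟩
            · rw [neg_smul, ← smul_neg]; exact ha
            · rw [show (-t) * β = t * (-β) by ring]; exact hb
          · refine ⟨ws, hwsW, ?_, ?_⟩
            · rw [neg_dotProduct]; intro h; apply hwsg'; linarith [h]
            · have : (-d) ⬝ᵥ ws - (-β) = -(d ⬝ᵥ ws - β) := by
                rw [neg_dotProduct]; ring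
              rw [this, div_neg]
              linarith
        · -- use (d, β)
          apply step_key k W W₁ W₂ hunion c α hs1 hs2 d β hdS' hline
          exact ⟨ws, hwsW, hwsg', hpos⟩
      obtain ⟨c'', hc'', α'', hs1', hs2', hlt⟩ := hstep
      exact ih c'' hc'' α'' hs1' hs2' (by omega)

theorem stmt_11 (k n : ℕ) (hkn : k < n)
    (W : Finset (Fin k → ℝ)) (hcard : W.card = n)
    (hgen : ∀ c : Fin k → ℝ, c ≠ 0 → ∀ α : ℝ,
      (W.filter (fun w => c ⬝ᵥ w = α)).card ≤ k)
    (W₁ W₂ : Finset (Fin k → ℝ)) (hunion : W₁ ∪ W₂ = W)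
    (hdisj : Disjoint W₁ W₂)
    (c : Fin k → ℝ) (hc : c ≠ 0) (α : ℝ)
    (hsep : (∀ w ∈ W₁, α ≤ c ⬝ᵥ w) ∧ (∀ w ∈ W₂, c ⬝ᵥ w ≤ α)) :
    ∃ c' : Fin k → ℝ, c' ≠ 0 ∧ ∃ α' : ℝ,
      (W.filter (fun w => c' ⬝ᵥ w = α')).card = k ∧
      (∀ w ∈ W₁, α' ≤ c' ⬝ᵥ w) ∧ (∀ w ∈ W₂, c' ⬝ᵥ w ≤ α') := by
  exact aux_ind k W W₁ W₂ (by omega) hgen hunion k c hc α hsep.1 hsep.2 (by omega)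
end

section
/- Let w₁,…,w_n ∈ ℝ^k, let μ_q, μ_r ∈ ℝ^k, and let (T_q, T_r) be a partition of a finite index set S ⊆ [n]. If (W[T_q], W[T_r]) is not weakly linearly separated by the hyperplane with normal μ_q − μ_r, then there exists another partition (T_q', T_r') of S with |T_q'| = |T_q| such that ⟨μ_q, Σ_{j∈T_q'} w_j⟩ + ⟨μ_r, Σ_{j∈T_r'} w_j⟩ > ⟨μ_q, Σ_{j∈T_q} w_j⟩ + ⟨μ_r, Σ_{j∈T_r} w_j⟩. -/
/-!
If no threshold separates the two parts along `c = μq - μr`, some `a ∈ Tq` and `b ∈ Tr` satisfy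
`⟨c, w a⟩ < ⟨c, w b⟩`. Swapping `a` and `b` between the parts keeps `|Tq|` and raises the
objective by `⟨c, w b - w a⟩ > 0`.
-/

open Finset Matrix

theorem exists_lt_of_not_separated {ι α : Type*} [LinearOrder α] [Nonempty α]
    {f : ι → α} {A B : Finset ι}
    (h : ¬ ∃ β, (∀ j ∈ A, β ≤ f j) ∧ (∀ j ∈ B, f j ≤ β)) :
    ∃ a ∈ A, ∃ b ∈ B, f a < f b := by
  by_contra! hle
  apply h
  rcases A.eq_empty_or_nonempty with rfl | hA
  · obtain ⟨M, hM⟩ := (B.image f).exists_le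
    exact ⟨M, by simp, fun j hj => hM _ (mem_image_of_mem f hj)⟩
  · exact ⟨A.inf' hA f, fun j hj => inf'_le f hj,
      fun j hj => le_inf' hA f fun a ha => hle a ha j hj⟩

namespace Finset

variable {ι : Type*} [DecidableEq ι] {A B : Finset ι} {a b : ι}

theorem insert_erase_union_insert_erase (ha : a ∈ A) (hb : b ∈ B) :
    insert b (A.erase a) ∪ insert a (B.erase b) = A ∪ B := by
  ext x
  simp only [mem_union, mem_insert, mem_erase]
  by_cases hxa : x = a <;> by_cases hxb : x = b <;> subst_vars <;> tauto

theorem disjoint_insert_erase_insert_erase (h : Disjoint A B) (ha : a ∈ A) (hb : b ∈ B) :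
    Disjoint (insert b (A.erase a)) (insert a (B.erase b)) := by
  have hab : a ≠ b := h.forall_ne_finset ha hb
  simp only [disjoint_insert_left, disjoint_insert_right, mem_insert, mem_erase, not_or]
  exact ⟨⟨hab, fun haa => haa.1 rfl⟩, fun hbb => hbb.1 rfl, h.mono (erase_subset a A) (erase_subset b B)⟩

theorem card_insert_erase_of_notMem (ha : a ∈ A) (hb : b ∉ A) :
    #(insert b (A.erase a)) = #A := by
  rw [card_insert_of_notMem (fun h => hb (mem_of_mem_erase h)), card_erase_add_one ha]

theorem sum_insert_erase_of_notMem {M : Type*} [AddCommGroup M] (g : ι → M)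
    (ha : a ∈ A) (hb : b ∉ A) :
    ∑ j ∈ insert b (A.erase a), g j = ∑ j ∈ A, g j - g a + g b := by
  rw [sum_insert (fun h => hb (mem_of_mem_erase h)), sum_erase_eq_sub ha, add_comm]

end Finset

theorem stmt_12 (n k : ℕ) (w : Fin n → (Fin k → ℝ)) (μq μr : Fin k → ℝ)
    (S Tq Tr : Finset (Fin n)) (hunion : Tq ∪ Tr = S) (hdisj : Disjoint Tq Tr)
    (hnotsep : ¬ ∃ β : ℝ,
      (∀ j ∈ Tq, β ≤ (μq - μr) ⬝ᵥ w j) ∧ (∀ j ∈ Tr, (μq - μr) ⬝ᵥ w j ≤ β)) :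
    ∃ Tq' Tr' : Finset (Fin n), Tq' ∪ Tr' = S ∧ Disjoint Tq' Tr' ∧
      Tq'.card = Tq.card ∧
      μq ⬝ᵥ (∑ j ∈ Tq, w j) + μr ⬝ᵥ (∑ j ∈ Tr, w j) <
        μq ⬝ᵥ (∑ j ∈ Tq', w j) + μr ⬝ᵥ (∑ j ∈ Tr', w j) := by
  obtain ⟨a, ha, b, hb, hlt⟩ := exists_lt_of_not_separated hnotsep
  have hbq : b ∉ Tq := disjoint_right.1 hdisj hb
  have har : a ∉ Tr := disjoint_left.1 hdisj ha
  refine ⟨insert b (Tq.erase a), insert a (Tr.erase b),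
    hunion ▸ insert_erase_union_insert_erase ha hb,
    disjoint_insert_erase_insert_erase hdisj ha hb, card_insert_erase_of_notMem ha hbq, ?_⟩
  rw [sum_insert_erase_of_notMem w ha hbq, sum_insert_erase_of_notMem w hb har]
  simp only [dotProduct_add, dotProduct_sub, sub_dotProduct] at hlt ⊢
  linarith
end

section
/- If A = UΛUᵀ = U'Λ'(U')ᵀ are two spectral decompositions of a real symmetric n×n matrix A of rank k, with U, U' ∈ ℝ^{n×k} having orthonormal columns that are eigenvectors with (nonzero) eigenvalues on the diagonals of Λ, Λ', then the number of distinct rows of U equals the number of distinct rows of U'. -/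
/-! From `U' = U' Λ' (U'ᵀ U') Λ'⁻¹ = A U' Λ'⁻¹ = U (Λ Uᵀ U' Λ'⁻¹)`, every row of `U'` is the image
of the same row of `U` under one fixed linear map, so `U'` has at most as many distinct rows as `U`.
Exchanging the roles of the two decompositions gives the reverse inequality. -/

open Finset Matrix

lemma card_image_rows_le_of_eq_mul {m k l R : Type*} [Fintype m] [Fintype k]
    [DecidableEq (k → R)] [DecidableEq (l → R)] [NonUnitalNonAssocSemiring R]
    {B : Matrix m l R} {C : Matrix m k R} {M : Matrix k l R} (h : B = C * M) :
    (univ.image fun i => B i).card ≤ (univ.image fun i => C i).card := by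
  have hrows : (univ.image fun i => B i) = (univ.image fun i => C i).image (· ᵥ* M) := by
    rw [image_image, h]
    rfl
  rw [hrows]
  exact card_image_le

lemma exists_eq_mul_of_mul_diagonal_mul_transpose_eq {m k K : Type*} [Fintype m] [Fintype k]
    [DecidableEq k] [Field K] {U U' : Matrix m k K} {d d' : k → K}
    (h : U * diagonal d * Uᵀ = U' * diagonal d' * U'ᵀ) (horth' : U'ᵀ * U' = 1)
    (hd' : ∀ q, d' q ≠ 0) :
    ∃ O : Matrix k k K, U' = U * O := by
  have hinv : diagonal d' * diagonal d'⁻¹ = 1 := by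
    rw [diagonal_mul_diagonal, ← diagonal_one]
    exact congrArg diagonal (funext fun q => mul_inv_cancel₀ (hd' q))
  refine ⟨diagonal d * Uᵀ * U' * diagonal d'⁻¹, ?_⟩
  calc U' = U' * diagonal d' * (U'ᵀ * U') * diagonal d'⁻¹ := by
        rw [horth', Matrix.mul_one, Matrix.mul_assoc, hinv, Matrix.mul_one]
    _ = U * diagonal d * Uᵀ * U' * diagonal d'⁻¹ := by
        rw [h]
        simp only [Matrix.mul_assoc]
    _ = U * (diagonal d * Uᵀ * U' * diagonal d'⁻¹) := by
        simp only [Matrix.mul_assoc]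

theorem stmt_15_general (n k : ℕ) (A : Matrix (Fin n) (Fin n) ℝ)
    (U U' : Matrix (Fin n) (Fin k) ℝ) (d d' : Fin k → ℝ)
    (hdec : A = U * Matrix.diagonal d * Uᵀ)
    (hdec' : A = U' * Matrix.diagonal d' * U'ᵀ)
    (horth : Uᵀ * U = 1) (horth' : U'ᵀ * U' = 1)
    (hd : ∀ q, d q ≠ 0) (hd' : ∀ q, d' q ≠ 0) :
    (Finset.univ.image (fun i : Fin n => U i)).card =
      (Finset.univ.image (fun i : Fin n => U' i)).card := by
  obtain ⟨O, hO⟩ :=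
    exists_eq_mul_of_mul_diagonal_mul_transpose_eq (hdec.symm.trans hdec') horth' hd'
  obtain ⟨O', hO'⟩ :=
    exists_eq_mul_of_mul_diagonal_mul_transpose_eq (hdec'.symm.trans hdec) horth hd
  exact le_antisymm (card_image_rows_le_of_eq_mul hO') (card_image_rows_le_of_eq_mul hO)

theorem stmt_15 (n k : ℕ) (A : Matrix (Fin n) (Fin n) ℝ) (hA : A.IsSymm)
    (hrank : A.rank = k)
    (U U' : Matrix (Fin n) (Fin k) ℝ) (d d' : Fin k → ℝ)
    (hdec : A = U * Matrix.diagonal d * Uᵀ)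
    (hdec' : A = U' * Matrix.diagonal d' * U'ᵀ)
    (horth : Uᵀ * U = 1) (horth' : U'ᵀ * U' = 1)
    (hd : ∀ q, d q ≠ 0) (hd' : ∀ q, d' q ≠ 0) :
    (Finset.univ.image (fun i : Fin n => U i)).card =
      (Finset.univ.image (fun i : Fin n => U' i)).card :=
  stmt_15_general n k A U U' d d' hdec hdec' horth horth' hd hd'
end
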